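/- Let σ > 0 and X̂ ∈ ℝ^{n×n} be given, and define Z(W) := X̂ − σ(QW + G) and ψ(W) := inf_{Z ∈ ℝ^{n×n}} L_σ(Z, W; X̂) for W ∈ Range(Q). Then: (i) for every W ∈ Range(Q), the infimum over Z is attained uniquely at Z = σ^{-1}(Z(W) − Π_{𝔅_n}(Z(W))), and ψ(W) = ½⟨W, QW⟩ + (1/σ)⟨Z(W), Π_{𝔅_n}(Z(W))⟩ − (1/(2σ))(‖Π_{𝔅_n}(Z(W))‖² + ‖X̂‖²); (ii) ψ is strongly convex and continuously differentiable on Range(Q) with ∇ψ(W) = QW − QΠ_{𝔅_n}(Z(W)); (iii) a pair (Z̄, W̄) ∈ ℝ^{n×n} × Range(Q) is the unique minimizer of L_σ(·,·; X̂) over ℝ^{n×n} × Range(Q) if and only if W̄ minimizes ψ over Range(Q) and Z̄ = σ^{-1}(Z(W̄) − Π_{𝔅_n}(Z(W̄))). -/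

import Mathlib

open Filter Topology
open scoped RealInnerProductSpace

/-- The space `ℝ^{n×n}` of square matrices endowed with the Frobenius (Euclidean)
inner product, realized as a Euclidean space indexed by pairs. -/
abbrev MatSp (n : ℕ) := EuclideanSpace ℝ (Fin n × Fin n)

/-- The Birkhoff polytope `𝔅ₙ` of doubly stochastic matrices. -/
def Birkhoff (n : ℕ) : Set (MatSp n) :=
  {X | (∀ i, ∑ j, X (i, j) = 1) ∧ (∀ j, ∑ i, X (i, j) = 1) ∧ ∀ q, 0 ≤ X q}

/-- The support function `δ*_{𝔅ₙ}(Z) = max_{X ∈ 𝔅ₙ} ⟨X, Z⟩` of the Birkhoff polytope. -/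
noncomputable def suppB (n : ℕ) (Z : MatSp n) : ℝ :=
  sSup ((fun X => ⟪X, Z⟫) '' Birkhoff n)

/-- The primal objective of problem (P): `f(X) = ½⟨X, QX⟩ + ⟨G, X⟩`. -/
noncomputable def objP {n : ℕ} (Q : MatSp n →ₗ[ℝ] MatSp n) (G X : MatSp n) : ℝ :=
  (1 / 2) * ⟪X, Q X⟫ + ⟪G, X⟫

/-- The feasible set of the dual problem (D): `Z + QW + G = 0`, `W ∈ Range(Q)`. -/
def feasD {n : ℕ} (Q : MatSp n →ₗ[ℝ] MatSp n) (G : MatSp n) :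
    Set (MatSp n × MatSp n) :=
  {zw | zw.1 + Q zw.2 + G = 0 ∧ zw.2 ∈ LinearMap.range Q}

/-- The dual objective `g(Z, W) = δ*_{𝔅ₙ}(Z) + ½⟨W, QW⟩`. -/
noncomputable def objD {n : ℕ} (Q : MatSp n →ₗ[ℝ] MatSp n) (zw : MatSp n × MatSp n) : ℝ :=
  suppB n zw.1 + (1 / 2) * ⟪zw.2, Q zw.2⟫

/-- The optimal solution set of problem (P). -/
noncomputable def solP {n : ℕ} (Q : MatSp n →ₗ[ℝ] MatSp n) (G : MatSp n) : Set (MatSp n) :=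
  {X ∈ Birkhoff n | ∀ Y ∈ Birkhoff n, objP Q G X ≤ objP Q G Y}

/-- The optimal solution set of problem (D). -/
noncomputable def solD {n : ℕ} (Q : MatSp n →ₗ[ℝ] MatSp n) (G : MatSp n) :
    Set (MatSp n × MatSp n) :=
  {zw ∈ feasD Q G | ∀ zw' ∈ feasD Q G, objD Q zw ≤ objD Q zw'}

/-- The augmented Lagrangian
`L_σ(Z, W; X) = δ*_{𝔅ₙ}(Z) + ½⟨W, QW⟩ − ⟨X, Z + QW + G⟩ + (σ/2)‖Z + QW + G‖²`. -/
noncomputable def augL {n : ℕ} (Q : MatSp n →ₗ[ℝ] MatSp n) (G : MatSp n) (σ : ℝ)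
    (Z W X : MatSp n) : ℝ :=
  suppB n Z + (1 / 2) * ⟪W, Q W⟫ - ⟪X, Z + Q W + G⟫ + (σ / 2) * ‖Z + Q W + G‖ ^ 2


namespace S17
variable {n : ℕ}

lemma birkhoff_convex : Convex ℝ (Birkhoff n) := by
  intro X hX Y hY a b ha hb hab
  refine ⟨fun i => ?_, fun j => ?_, fun q => ?_⟩
  · simp only [PiLp.add_apply, PiLp.smul_apply, smul_eq_mul, Finset.sum_add_distrib,
      ← Finset.mul_sum, hX.1 i, hY.1 i]
    ring_nf; linarith
  · simp only [PiLp.add_apply, PiLp.smul_apply, smul_eq_mul, Finset.sum_add_distrib,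
      ← Finset.mul_sum, hX.2.1 j, hY.2.1 j]
    ring_nf; linarith
  · have := hX.2.2 q; have := hY.2.2 q
    simp only [PiLp.add_apply, PiLp.smul_apply, smul_eq_mul]
    positivity

lemma entry_le_one {X : MatSp n} (hX : X ∈ Birkhoff n) (q : Fin n × Fin n) : X q ≤ 1 := by
  obtain ⟨i, j⟩ := q
  have h := hX.1 i
  calc X (i, j) ≤ ∑ j', X (i, j') :=
        Finset.single_le_sum (fun k _ => hX.2.2 (i, k)) (Finset.mem_univ j)
    _ = 1 := h

lemma inner_le_of_mem {X Z : MatSp n} (hX : X ∈ Birkhoff n) : ⟪X, Z⟫ ≤ ∑ q, |Z q| := by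
  rw [PiLp.inner_apply]
  refine Finset.sum_le_sum fun q _ => ?_
  simp only [RCLike.inner_apply, conj_trivial]
  rw [mul_comm]
  calc X q * Z q ≤ X q * |Z q| := by
        have := hX.2.2 q; exact mul_le_mul_of_nonneg_left (le_abs_self _) this
    _ ≤ 1 * |Z q| := mul_le_mul_of_nonneg_right (entry_le_one hX q) (abs_nonneg _)
    _ = |Z q| := one_mul _

lemma bddAbove_img (Z : MatSp n) : BddAbove ((fun X => ⟪X, Z⟫) '' Birkhoff n) := by
  refine ⟨∑ q, |Z q|, fun y hy => ?_⟩
  obtain ⟨X, hX, rfl⟩ := hy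
  exact inner_le_of_mem hX

lemma le_suppB {Z X : MatSp n} (hX : X ∈ Birkhoff n) : ⟪X, Z⟫ ≤ suppB n Z :=
  le_csSup (bddAbove_img Z) ⟨X, hX, rfl⟩



variable {PiB : MatSp n → MatSp n}
section proj
variable (hPiB : ∀ Y, PiB Y ∈ Birkhoff n ∧ ∀ V ∈ Birkhoff n, ‖Y - PiB Y‖ ≤ ‖Y - V‖)
include hPiB

/-- variational inequality for the projection -/
lemma proj_vi (Y : MatSp n) {X : MatSp n} (hX : X ∈ Birkhoff n) :
    ⟪Y - PiB Y, X - PiB Y⟫ ≤ 0 := by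
  set P := PiB Y with hP
  by_contra h
  push_neg at h
  set b := ⟪Y - P, X - P⟫ with hb
  have hXP : X ≠ P := by
    intro hXP; rw [hXP] at hb; simp [hb] at h
  have hs : 0 < ‖X - P‖ ^ 2 := by
    have h0 : X - P ≠ 0 := sub_ne_zero.mpr hXP
    have := norm_pos_iff.mpr h0
    positivity
  set s := ‖X - P‖ ^ 2 with hsdef
  set t : ℝ := min 1 (b / s) with ht
  have ht0 : 0 < t := lt_min one_pos (div_pos h hs)
  have ht1 : t ≤ 1 := min_le_left _ _
  have hts : t * s ≤ b := by
    have : t ≤ b / s := min_le_right _ _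
    calc t * s ≤ (b / s) * s := mul_le_mul_of_nonneg_right this hs.le
      _ = b := by field_simp
  have hmem : (1 - t) • P + t • X ∈ Birkhoff n :=
    birkhoff_convex (hPiB Y).1 hX (by linarith) ht0.le (by ring)
  have hle := (hPiB Y).2 _ hmem
  have hsq : ‖Y - P‖ ^ 2 ≤ ‖Y - ((1 - t) • P + t • X)‖ ^ 2 := by
    exact pow_le_pow_left₀ (norm_nonneg _) hle 2
  have hrw : Y - ((1 - t) • P + t • X) = (Y - P) - t • (X - P) := by module
  have hexp : ‖(Y - P) - t • (X - P)‖ ^ 2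
      = ‖Y - P‖ ^ 2 - 2 * (t * ⟪Y - P, X - P⟫) + t ^ 2 * ‖X - P‖ ^ 2 := by
    rw [norm_sub_sq_real, real_inner_smul_right, norm_smul, Real.norm_eq_abs,
      abs_of_pos ht0]
    ring
  rw [hrw, hexp] at hsq
  rw [hb] at hts h
  rw [hsdef] at hts
  nlinarith [hsq, ht0, hts, h]

/-- support function value at scaled residual -/
lemma suppB_res {c : ℝ} (hc : 0 ≤ c) (Y : MatSp n) :
    suppB n (c • (Y - PiB Y)) = ⟪PiB Y, c • (Y - PiB Y)⟫ := by
  refine le_antisymm (csSup_le ⟨⟪PiB Y, c • (Y - PiB Y)⟫, PiB Y, (hPiB Y).1, rfl⟩ ?_)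
    (le_suppB (hPiB Y).1)
  rintro y ⟨X, hX, rfl⟩
  have hvi := proj_vi hPiB Y hX
  have h1 : ⟪X - PiB Y, c • (Y - PiB Y)⟫ ≤ 0 := by
    rw [real_inner_smul_right]
    have : ⟪X - PiB Y, Y - PiB Y⟫ ≤ 0 := by rwa [real_inner_comm] at hvi
    exact mul_nonpos_of_nonneg_of_nonpos hc this
  have h2 : ⟪X, c • (Y - PiB Y)⟫ = ⟪PiB Y, c • (Y - PiB Y)⟫ + ⟪X - PiB Y, c • (Y - PiB Y)⟫ := by
    rw [← inner_add_left]; congr 1; abel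
  linarith [h1, h2.le, h2.ge]

/-- projections are nonexpansive -/
lemma proj_nonexp (Y Y' : MatSp n) : ‖PiB Y' - PiB Y‖ ≤ ‖Y' - Y‖ := by
  have h1 := proj_vi hPiB Y (hPiB Y').1
  have h2 := proj_vi hPiB Y' (hPiB Y).1
  have key : ‖PiB Y' - PiB Y‖ ^ 2 ≤ ⟪Y' - Y, PiB Y' - PiB Y⟫ := by
    rw [← real_inner_self_eq_norm_sq]
    simp only [inner_sub_left, inner_sub_right] at h1 h2 ⊢
    linarith [real_inner_comm (PiB Y) (PiB Y'), real_inner_comm Y (PiB Y),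
      real_inner_comm Y (PiB Y'), real_inner_comm Y' (PiB Y), real_inner_comm Y' (PiB Y')]
  have cs := real_inner_le_norm (Y' - Y) (PiB Y' - PiB Y)
  rcases eq_or_lt_of_le (norm_nonneg (PiB Y' - PiB Y)) with h | h
  · rw [← h]; exact norm_nonneg _
  · nlinarith [key, cs, h]


end proj

variable {Q : MatSp n →ₗ[ℝ] MatSp n} {G Xhat : MatSp n} {σ : ℝ}
  {ZofW : MatSp n → MatSp n} {ψ : MatSp n → ℝ}

lemma gg_mono (hPiB : ∀ Y, PiB Y ∈ Birkhoff n ∧ ∀ V ∈ Birkhoff n, ‖Y - PiB Y‖ ≤ ‖Y - V‖)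
    (Y Y' : MatSp n) :
    ⟪Y', PiB Y⟫ - (1/2)*‖PiB Y‖^2 ≤ ⟪Y', PiB Y'⟫ - (1/2)*‖PiB Y'‖^2 := by
  have h := (hPiB Y').2 _ (hPiB Y).1
  have hsq : ‖Y' - PiB Y'‖^2 ≤ ‖Y' - PiB Y‖^2 := by
    exact pow_le_pow_left₀ (norm_nonneg _) h 2
  rw [norm_sub_sq_real, norm_sub_sq_real] at hsq
  linarith

lemma augL_rewrite (hσ : 0 < σ) (hZofW : ∀ W, ZofW W = Xhat - σ • (Q W + G))
    (Z W : MatSp n) :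
    augL Q G σ Z W Xhat = suppB n Z + (σ/2)*‖Z - σ⁻¹ • (ZofW W)‖^2
      + (1/2)*⟪W, Q W⟫ - ‖Xhat‖^2/(2*σ) := by
  have hD : Z - σ⁻¹ • ZofW W = (Z + Q W + G) - σ⁻¹ • Xhat := by
    rw [hZofW W, smul_sub, smul_smul, inv_mul_cancel₀ hσ.ne', one_smul]
    abel
  rw [augL, hD]
  have hexp : ‖Z + Q W + G - σ⁻¹ • Xhat‖^2
      = ‖Z + Q W + G‖^2 - 2*(σ⁻¹ * ⟪Xhat, Z + Q W + G⟫) + σ⁻¹^2 * ‖Xhat‖^2 := by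
    rw [norm_sub_sq_real, real_inner_smul_right, norm_smul, Real.norm_eq_abs,
      abs_of_pos (inv_pos.mpr hσ), real_inner_comm]
    ring
  rw [hexp]
  field_simp
  ring


lemma quad_lower (hσ : 0 < σ)
    (hPiB : ∀ Y, PiB Y ∈ Birkhoff n ∧ ∀ V ∈ Birkhoff n, ‖Y - PiB Y‖ ≤ ‖Y - V‖)
    (hZofW : ∀ W, ZofW W = Xhat - σ • (Q W + G)) (Z W : MatSp n) :
    augL Q G σ (σ⁻¹ • (ZofW W - PiB (ZofW W))) W Xhat + (σ/2)*‖Z - σ⁻¹ • (ZofW W - PiB (ZofW W))‖^2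
      ≤ augL Q G σ Z W Xhat := by
  set Y := ZofW W with hY
  set P := PiB Y with hPdef
  set Zs : MatSp n := σ⁻¹ • (Y - P) with hZs
  rw [augL_rewrite hσ hZofW Z W, augL_rewrite hσ hZofW Zs W]
  have hsupZs : suppB n Zs = ⟪P, Zs⟫ := suppB_res hPiB (inv_nonneg.mpr hσ.le) Y
  have hsupZ : ⟪P, Z⟫ ≤ suppB n Z := le_suppB (hPiB Y).1
  have hZsu : Zs - σ⁻¹ • Y = -(σ⁻¹ • P) := by rw [hZs]; module
  have hn1 : ‖Zs - σ⁻¹ • Y‖^2 = σ⁻¹^2 * ‖P‖^2 := by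
    rw [hZsu, norm_neg, norm_smul, Real.norm_eq_abs, abs_of_pos (inv_pos.mpr hσ), mul_pow]
  have hZu : Z - σ⁻¹ • Y = (Z - Zs) - σ⁻¹ • P := by rw [hZs]; module
  have hn2 : ‖Z - σ⁻¹ • Y‖^2
      = ‖Z - Zs‖^2 - 2*(σ⁻¹ * ⟪Z - Zs, P⟫) + σ⁻¹^2 * ‖P‖^2 := by
    rw [hZu, norm_sub_sq_real, real_inner_smul_right, norm_smul, Real.norm_eq_abs,
      abs_of_pos (inv_pos.mpr hσ), mul_pow]
  have hsum : ⟪P, Zs⟫ + ⟪P, Z - Zs⟫ = ⟪P, Z⟫ := by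
    rw [← inner_add_right]; congr 1; abel
  have hcomm : ⟪Z - Zs, P⟫ = ⟪P, Z - Zs⟫ := real_inner_comm _ _
  rw [hsupZs, hn1, hn2]
  have e1 : σ/2*(‖Z - Zs‖^2 - 2*(σ⁻¹*⟪Z - Zs, P⟫) + σ⁻¹^2*‖P‖^2)
      = σ/2*‖Z - Zs‖^2 - ⟪Z - Zs, P⟫ + σ⁻¹/2*‖P‖^2 := by field_simp
  have e2 : σ/2*(σ⁻¹^2*‖P‖^2) = σ⁻¹/2*‖P‖^2 := by field_simp
  rw [e1, e2]
  linarith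

lemma psi_eq (hσ : 0 < σ)
    (hPiB : ∀ Y, PiB Y ∈ Birkhoff n ∧ ∀ V ∈ Birkhoff n, ‖Y - PiB Y‖ ≤ ‖Y - V‖)
    (hZofW : ∀ W, ZofW W = Xhat - σ • (Q W + G))
    (hψ : ∀ W, ψ W = sInf (Set.range fun Z => augL Q G σ Z W Xhat)) (W : MatSp n) :
    ψ W = augL Q G σ (σ⁻¹ • (ZofW W - PiB (ZofW W))) W Xhat := by
  set Zs : MatSp n := σ⁻¹ • (ZofW W - PiB (ZofW W)) with hZs
  have hlow : ∀ Z : MatSp n, augL Q G σ Zs W Xhat ≤ augL Q G σ Z W Xhat := by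
    intro Z
    have := quad_lower hσ hPiB hZofW Z W
    nlinarith [sq_nonneg ‖Z - Zs‖, hσ]
  rw [hψ]
  refine le_antisymm (csInf_le ⟨augL Q G σ Zs W Xhat, ?_⟩ ⟨Zs, rfl⟩)
    (le_csInf ⟨_, ⟨Zs, rfl⟩⟩ ?_)
  · rintro y ⟨Z, rfl⟩; exact hlow Z
  · rintro y ⟨Z, rfl⟩; exact hlow Z

lemma psi_strict (hσ : 0 < σ)
    (hPiB : ∀ Y, PiB Y ∈ Birkhoff n ∧ ∀ V ∈ Birkhoff n, ‖Y - PiB Y‖ ≤ ‖Y - V‖)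
    (hZofW : ∀ W, ZofW W = Xhat - σ • (Q W + G))
    (hψ : ∀ W, ψ W = sInf (Set.range fun Z => augL Q G σ Z W Xhat)) (W : MatSp n)
    {Z : MatSp n} (hZ : Z ≠ σ⁻¹ • (ZofW W - PiB (ZofW W))) :
    ψ W < augL Q G σ Z W Xhat := by
  have h := quad_lower hσ hPiB hZofW Z W
  rw [← psi_eq hσ hPiB hZofW hψ W] at h
  have hpos : 0 < ‖Z - σ⁻¹ • (ZofW W - PiB (ZofW W))‖ := by
    rw [norm_pos_iff]; exact sub_ne_zero.mpr hZ
  have : 0 < σ/2 * ‖Z - σ⁻¹ • (ZofW W - PiB (ZofW W))‖^2 := by positivity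
  linarith

lemma psi_formula (hσ : 0 < σ)
    (hPiB : ∀ Y, PiB Y ∈ Birkhoff n ∧ ∀ V ∈ Birkhoff n, ‖Y - PiB Y‖ ≤ ‖Y - V‖)
    (hZofW : ∀ W, ZofW W = Xhat - σ • (Q W + G))
    (hψ : ∀ W, ψ W = sInf (Set.range fun Z => augL Q G σ Z W Xhat)) (W : MatSp n) :
    ψ W = (1/2)*⟪W, Q W⟫ + (1/σ)*⟪ZofW W, PiB (ZofW W)⟫
      - (1/(2*σ))*(‖PiB (ZofW W)‖^2 + ‖Xhat‖^2) := by
  rw [psi_eq hσ hPiB hZofW hψ W, augL_rewrite hσ hZofW]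
  set Y := ZofW W with hY
  set P := PiB Y with hPdef
  have hsupZs : suppB n (σ⁻¹ • (Y - P)) = ⟪P, σ⁻¹ • (Y - P)⟫ :=
    suppB_res hPiB (inv_nonneg.mpr hσ.le) Y
  have hip : ⟪P, σ⁻¹ • (Y - P)⟫ = σ⁻¹ * (⟪Y, P⟫ - ‖P‖^2) := by
    rw [real_inner_smul_right, inner_sub_right, real_inner_self_eq_norm_sq,
      real_inner_comm]
  have hZsu : σ⁻¹ • (Y - P) - σ⁻¹ • Y = -(σ⁻¹ • P) := by module
  have hn1 : ‖σ⁻¹ • (Y - P) - σ⁻¹ • Y‖^2 = σ⁻¹^2 * ‖P‖^2 := by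
    rw [hZsu, norm_neg, norm_smul, Real.norm_eq_abs, abs_of_pos (inv_pos.mpr hσ), mul_pow]
  rw [hsupZs, hip, hn1]
  field_simp
  ring


lemma quad_expand (hsa : ∀ X Y : MatSp n, ⟪Q X, Y⟫ = ⟪X, Q Y⟫) (W W' : MatSp n) :
    ⟪W', Q W'⟫ = ⟪W, Q W⟫ + 2*⟪Q W, W' - W⟫ + ⟪W' - W, Q (W' - W)⟫ := by
  have h1 : W' = W + (W' - W) := by abel
  nth_rewrite 1 [h1]; nth_rewrite 2 [h1]
  rw [map_add, inner_add_left, inner_add_right, inner_add_right,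
    ← hsa W (W' - W), real_inner_comm (W' - W) (Q W)]
  ring

lemma Ydiff (hZofW : ∀ W, ZofW W = Xhat - σ • (Q W + G)) (W W' : MatSp n) :
    ZofW W' - ZofW W = -(σ • Q (W' - W)) := by
  rw [hZofW, hZofW, map_sub, smul_sub]; module

lemma grad_lower (hσ : 0 < σ) (hsa : ∀ X Y : MatSp n, ⟪Q X, Y⟫ = ⟪X, Q Y⟫)
    (hPiB : ∀ Y, PiB Y ∈ Birkhoff n ∧ ∀ V ∈ Birkhoff n, ‖Y - PiB Y‖ ≤ ‖Y - V‖)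
    (hZofW : ∀ W, ZofW W = Xhat - σ • (Q W + G))
    (hψ : ∀ W, ψ W = sInf (Set.range fun Z => augL Q G σ Z W Xhat)) (W W' : MatSp n) :
    ψ W + ⟪Q W - Q (PiB (ZofW W)), W' - W⟫ + (1/2)*⟪W' - W, Q (W' - W)⟫ ≤ ψ W' := by
  rw [psi_formula hσ hPiB hZofW hψ W, psi_formula hσ hPiB hZofW hψ W']
  set Y := ZofW W
  set Y' := ZofW W'
  set P := PiB Y
  set P' := PiB Y'
  set d := W' - W with hd
  have eq1 := quad_expand hsa W W'
  have eq2 : ⟪Q W - Q P, d⟫ = ⟪Q W, d⟫ - ⟪d, Q P⟫ := by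
    rw [inner_sub_left, real_inner_comm d (Q P)]
  have eq3 : (1/σ) * ⟪Y', P⟫ = (1/σ) * ⟪Y, P⟫ - ⟪d, Q P⟫ := by
    have h1 : ⟪Y', P⟫ = ⟪Y, P⟫ + ⟪Y' - Y, P⟫ := by rw [← inner_add_left]; congr 1; abel
    have h2 : ⟪Y' - Y, P⟫ = -(σ * ⟪d, Q P⟫) := by
      rw [Ydiff hZofW W W', inner_neg_left, real_inner_smul_left, hsa]
    rw [h1, h2]; field_simp; ring
  have hgg := gg_mono hPiB Y Y'
  have hgg' : (1/σ) * (⟪Y', P⟫ - (1/2)*‖P‖^2) ≤ (1/σ) * (⟪Y', P'⟫ - (1/2)*‖P'‖^2) :=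
    mul_le_mul_of_nonneg_left hgg (by positivity)
  have e4 : (1/σ) * (⟪Y', P⟫ - (1/2)*‖P‖^2) = (1/σ)*⟪Y', P⟫ - (1/(2*σ))*‖P‖^2 := by
    field_simp
  have e5 : (1/σ) * (⟪Y', P'⟫ - (1/2)*‖P'‖^2) = (1/σ)*⟪Y', P'⟫ - (1/(2*σ))*‖P'‖^2 := by
    field_simp
  rw [e4, e5] at hgg'
  linarith [hgg', eq1, eq2, eq3]

lemma grad_upper (hσ : 0 < σ) (hsa : ∀ X Y : MatSp n, ⟪Q X, Y⟫ = ⟪X, Q Y⟫)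
    (hPiB : ∀ Y, PiB Y ∈ Birkhoff n ∧ ∀ V ∈ Birkhoff n, ‖Y - PiB Y‖ ≤ ‖Y - V‖)
    (hZofW : ∀ W, ZofW W = Xhat - σ • (Q W + G))
    (hψ : ∀ W, ψ W = sInf (Set.range fun Z => augL Q G σ Z W Xhat)) (W W' : MatSp n) :
    ψ W' ≤ ψ W + ⟪Q W - Q (PiB (ZofW W)), W' - W⟫ + (1/2)*⟪W' - W, Q (W' - W)⟫
      + σ * ‖Q (W' - W)‖^2 := by
  rw [psi_formula hσ hPiB hZofW hψ W, psi_formula hσ hPiB hZofW hψ W']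
  set Y := ZofW W
  set Y' := ZofW W'
  set P := PiB Y
  set P' := PiB Y'
  set d := W' - W with hd
  have eq1 := quad_expand hsa W W'
  have eq2 : ⟪Q W - Q P, d⟫ = ⟪Q W, d⟫ - ⟪d, Q P⟫ := by
    rw [inner_sub_left, real_inner_comm d (Q P)]
  -- gg(Y') ≤ gg(Y) + ⟪Y' - Y, P'⟫
  have hgg := gg_mono hPiB Y' Y
  have hsplit : ⟪Y, P'⟫ = ⟪Y', P'⟫ - ⟪Y' - Y, P'⟫ := by
    rw [inner_sub_left]; ring
  -- ⟪Y' - Y, P'⟫ ≤ ⟪Y' - Y, P⟫ + ‖Y' - Y‖^2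
  have hYn : ‖Y' - Y‖ = σ * ‖Q d‖ := by
    rw [Ydiff hZofW W W', norm_neg, norm_smul, Real.norm_eq_abs, abs_of_pos hσ]
  have hcs : ⟪Y' - Y, P' - P⟫ ≤ ‖Y' - Y‖^2 := by
    calc ⟪Y' - Y, P' - P⟫ ≤ ‖Y' - Y‖ * ‖P' - P‖ := real_inner_le_norm _ _
      _ ≤ ‖Y' - Y‖ * ‖Y' - Y‖ :=
          mul_le_mul_of_nonneg_left (proj_nonexp hPiB Y Y') (norm_nonneg _)
      _ = ‖Y' - Y‖^2 := (sq ‖Y' - Y‖).symm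
  have hsplit2 : ⟪Y' - Y, P'⟫ = ⟪Y' - Y, P⟫ + ⟪Y' - Y, P' - P⟫ := by
    rw [inner_sub_right]; ring
  have eq3 : (1/σ) * ⟪Y' - Y, P⟫ = -⟪d, Q P⟫ := by
    have h2 : ⟪Y' - Y, P⟫ = -(σ * ⟪d, Q P⟫) := by
      rw [Ydiff hZofW W W', inner_neg_left, real_inner_smul_left, hsa]
    rw [h2]; field_simp
  have hb : (1/σ) * ⟪Y' - Y, P' - P⟫ ≤ σ * ‖Q d‖^2 := by
    have := mul_le_mul_of_nonneg_left hcs (by positivity : (0:ℝ) ≤ 1/σ)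
    calc (1/σ) * ⟪Y' - Y, P' - P⟫ ≤ (1/σ) * ‖Y' - Y‖^2 := this
      _ = σ * ‖Q d‖^2 := by rw [hYn]; field_simp
  -- scale hgg by 1/σ
  have hgg' : (1/σ) * (⟪Y, P'⟫ - (1/2)*‖P'‖^2) ≤ (1/σ) * (⟪Y, P⟫ - (1/2)*‖P‖^2) :=
    mul_le_mul_of_nonneg_left hgg (by positivity)
  have e4 : ∀ (a : MatSp n) (r : ℝ), (1/σ) * (⟪Y, a⟫ - (1/2)*r) = (1/σ)*⟪Y, a⟫ - (1/(2*σ))*r := by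
    intro a r; field_simp
  rw [e4, e4] at hgg'
  have hY'P' : (1/σ) * ⟪Y', P'⟫
      = (1/σ)*⟪Y, P'⟫ + (1/σ)*⟪Y' - Y, P⟫ + (1/σ)*⟪Y' - Y, P' - P⟫ := by
    rw [hsplit, hsplit2]; ring
  linarith [hgg', eq1, eq2, eq3, hb, hY'P']

lemma posdef_on_range (hsa : ∀ X Y : MatSp n, ⟪Q X, Y⟫ = ⟪X, Q Y⟫)
    (hpsd : ∀ X : MatSp n, 0 ≤ ⟪X, Q X⟫) {W : MatSp n}
    (hW : W ∈ LinearMap.range Q) (h0 : ⟪W, Q W⟫ = 0) : W = 0 := by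
  have hb : ∀ U : MatSp n, ⟪U, Q W⟫ = 0 := by
    intro U
    set A := ⟪U, Q U⟫ with hA
    set B := ⟪U, Q W⟫ with hB
    have hA0 : 0 ≤ A := hpsd U
    have ht : ∀ t : ℝ, 0 ≤ t^2 * A + 2*t*B := by
      intro t
      have := hpsd (W + t • U)
      have hexp : ⟪W + t • U, Q (W + t • U)⟫ = t^2*A + 2*t*B := by
        rw [map_add, map_smul, inner_add_left, inner_add_right, inner_add_right,
          real_inner_smul_left, real_inner_smul_left, real_inner_smul_right,
          real_inner_smul_right, h0]
        have : ⟪W, Q U⟫ = B := by rw [hB, ← hsa, real_inner_comm]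
        rw [this, ← hA, ← hB]
        ring
      linarith [hexp ▸ this]
    have h1 := ht (-(B/(A+1)))
    have hA1 : (0:ℝ) < A + 1 := by linarith
    have hBz : B = 0 := by
      have h2 : (-(B/(A+1)))^2 * A + 2*(-(B/(A+1)))*B = -(B^2*(A+2))/(A+1)^2 := by
        field_simp; ring
      rw [h2] at h1
      have hpos : (0:ℝ) < (A+1)^2 := by positivity
      have h3 : 0 ≤ -(B^2*(A+2)) := by
        rw [le_div_iff₀ hpos] at h1; linarith [h1]
      nlinarith [sq_nonneg B, hA0, h3]
    exact hBz
  have hQW : Q W = 0 := by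
    have := hb (Q W)
    rwa [real_inner_self_eq_norm_sq, pow_eq_zero_iff (by norm_num), norm_eq_zero] at this
  obtain ⟨V, rfl⟩ := hW
  have : ⟪Q V, Q V⟫ = 0 := by rw [hsa, hQW, inner_zero_right]
  exact inner_self_eq_zero.mp this

lemma exists_sc_const (hsa : ∀ X Y : MatSp n, ⟪Q X, Y⟫ = ⟪X, Q Y⟫)
    (hpsd : ∀ X : MatSp n, 0 ≤ ⟪X, Q X⟫) :
    ∃ c : ℝ, 0 < c ∧ ∀ W ∈ LinearMap.range Q, c * ‖W‖^2 ≤ ⟪W, Q W⟫ := by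
  by_cases htriv : ∀ W ∈ LinearMap.range Q, W = (0 : MatSp n)
  · refine ⟨1, one_pos, fun W hW => ?_⟩
    rw [htriv W hW]; simp
  · push_neg at htriv
    obtain ⟨W₀, hW₀r, hW₀⟩ := htriv
    set S : Set (MatSp n) := (LinearMap.range Q : Set (MatSp n)) ∩ Metric.sphere 0 1 with hS
    have hclosed : IsClosed (LinearMap.range Q : Set (MatSp n)) :=
      Submodule.closed_of_finiteDimensional _
    have hcpt : IsCompact S := (isCompact_sphere 0 1).inter_left hclosed
    have hne : S.Nonempty := by
      refine ⟨‖W₀‖⁻¹ • W₀, Submodule.smul_mem _ _ hW₀r, ?_⟩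
      simp [norm_smul, norm_ne_zero_iff.mpr hW₀]
    have hcont : Continuous fun W : MatSp n => ⟪W, Q W⟫ :=
      continuous_id.inner (Q.continuous_of_finiteDimensional.comp continuous_id)
    obtain ⟨W₁, hW₁S, hmin⟩ := hcpt.exists_isMinOn hne hcont.continuousOn
    set c := ⟪W₁, Q W₁⟫ with hc
    have hW₁n : ‖W₁‖ = 1 := by
      have := hW₁S.2; simpa using this
    have hcpos : 0 < c := by
      rcases lt_or_eq_of_le (hpsd W₁) with h | h
      · exact h
      · exfalso
        have := posdef_on_range hsa hpsd hW₁S.1 h.symm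
        rw [this] at hW₁n; simp at hW₁n
    refine ⟨c, hcpos, fun W hW => ?_⟩
    rcases eq_or_ne W 0 with rfl | hWne
    · simp
    · have hnorm : (0:ℝ) < ‖W‖ := norm_pos_iff.mpr hWne
      have hmem : ‖W‖⁻¹ • W ∈ S :=
        ⟨Submodule.smul_mem _ _ hW, by simp [norm_smul, hnorm.ne']⟩
      have h1 : c ≤ ⟪‖W‖⁻¹ • W, Q (‖W‖⁻¹ • W)⟫ := hmin hmem
      have h2 : ⟪‖W‖⁻¹ • W, Q (‖W‖⁻¹ • W)⟫ = ‖W‖⁻¹^2 * ⟪W, Q W⟫ := by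
        rw [map_smul, real_inner_smul_left, real_inner_smul_right]; ring
      rw [h2] at h1
      have h3 : c * ‖W‖^2 ≤ ‖W‖⁻¹^2 * ⟪W, Q W⟫ * ‖W‖^2 :=
        mul_le_mul_of_nonneg_right h1 (by positivity)
      calc c * ‖W‖^2 ≤ ‖W‖⁻¹^2 * ⟪W, Q W⟫ * ‖W‖^2 := h3
        _ = ⟪W, Q W⟫ := by field_simp

section main
variable (hσ : 0 < σ) (hsa : ∀ X Y : MatSp n, ⟪Q X, Y⟫ = ⟪X, Q Y⟫)
    (hpsd : ∀ X : MatSp n, 0 ≤ ⟪X, Q X⟫)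
    (hPiB : ∀ Y, PiB Y ∈ Birkhoff n ∧ ∀ V ∈ Birkhoff n, ‖Y - PiB Y‖ ≤ ‖Y - V‖)
    (hZofW : ∀ W, ZofW W = Xhat - σ • (Q W + G))
    (hψ : ∀ W, ψ W = sInf (Set.range fun Z => augL Q G σ Z W Xhat))
include hσ hsa hpsd hPiB hZofW hψ

lemma strong_convex {c : ℝ} (hc : ∀ W ∈ LinearMap.range Q, c * ‖W‖^2 ≤ ⟪W, Q W⟫) :
    StrongConvexOn (LinearMap.range Q : Set (MatSp n)) c ψ := by
  constructor
  · exact (LinearMap.range Q).convex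
  intro x hx y hy a b ha hb hab
  have hb' : b = 1 - a := by linarith
  subst hb'
  set z := a • x + (1 - a) • y with hz
  have hzr : z ∈ LinearMap.range Q :=
    Submodule.add_mem _ (Submodule.smul_mem _ _ hx) (Submodule.smul_mem _ _ hy)
  set g := Q z - Q (PiB (ZofW z)) with hg
  have hxz : x - z = (1 - a) • (x - y) := by rw [hz]; module
  have hyz : y - z = a • (y - x) := by rw [hz]; module
  have hnx : ‖x - z‖^2 = (1-a)^2 * ‖x - y‖^2 := by
    rw [hxz, norm_smul, Real.norm_eq_abs, abs_of_nonneg hb, mul_pow]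
  have hny : ‖y - z‖^2 = a^2 * ‖x - y‖^2 := by
    rw [hyz, norm_smul, Real.norm_eq_abs, abs_of_nonneg ha, mul_pow, norm_sub_rev]
  have hcx : c * ‖x - z‖^2 ≤ ⟪x - z, Q (x - z)⟫ :=
    hc _ (Submodule.sub_mem _ hx hzr)
  have hcy : c * ‖y - z‖^2 ≤ ⟪y - z, Q (y - z)⟫ :=
    hc _ (Submodule.sub_mem _ hy hzr)
  have H1 : ψ z + ⟪g, x - z⟫ + (c/2)*‖x - z‖^2 ≤ ψ x := by
    have := grad_lower hσ hsa hPiB hZofW hψ z x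
    rw [← hg] at this; linarith
  have H2 : ψ z + ⟪g, y - z⟫ + (c/2)*‖y - z‖^2 ≤ ψ y := by
    have := grad_lower hσ hsa hPiB hZofW hψ z y
    rw [← hg] at this; linarith
  have hinner : a * ⟪g, x - z⟫ + (1-a) * ⟪g, y - z⟫ = 0 := by
    rw [hxz, hyz, real_inner_smul_right, real_inner_smul_right,
      show y - x = -(x - y) by abel, inner_neg_right]
    ring
  rw [hnx] at H1
  rw [hny] at H2
  have HA := mul_le_mul_of_nonneg_left H1 ha
  have HB := mul_le_mul_of_nonneg_left H2 hb
  simp only [smul_eq_mul]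
  nlinarith [HA, HB, hinner]

lemma psi_hasGradient (W : MatSp n) :
    HasGradientAt ψ (Q W - Q (PiB (ZofW W))) W := by
  set T := LinearMap.toContinuousLinearMap Q with hT
  set C := ‖T‖ with hC
  have hCb : ∀ x : MatSp n, ‖Q x‖ ≤ C * ‖x‖ := fun x => T.le_opNorm x
  have hC0 : 0 ≤ C := norm_nonneg _
  set K := C/2 + σ * C^2 with hK
  have hK0 : 0 ≤ K := by positivity
  rw [hasGradientAt_iff_isLittleO, Asymptotics.isLittleO_iff]
  intro ε hε
  rw [Metric.eventually_nhds_iff]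
  refine ⟨ε/(K+1), by positivity, fun W' hW' => ?_⟩
  rw [dist_eq_norm] at hW'
  set d := W' - W with hd
  set g := Q W - Q (PiB (ZofW W)) with hg
  have hlow := grad_lower hσ hsa hPiB hZofW hψ W W'
  have hup := grad_upper hσ hsa hPiB hZofW hψ W W'
  have hq1 : ⟪d, Q d⟫ ≤ C * ‖d‖^2 := by
    calc ⟪d, Q d⟫ ≤ ‖d‖ * ‖Q d‖ := real_inner_le_norm _ _
      _ ≤ ‖d‖ * (C * ‖d‖) := mul_le_mul_of_nonneg_left (hCb d) (norm_nonneg _)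
      _ = C * ‖d‖^2 := by ring
  have hq2 : ‖Q d‖^2 ≤ C^2 * ‖d‖^2 := by
    have := hCb d
    nlinarith [norm_nonneg (Q d), norm_nonneg d]
  have herr1 : 0 ≤ ψ W' - ψ W - ⟪g, d⟫ := by
    have hpsd' : 0 ≤ ⟪d, Q d⟫ := hpsd d
    linarith
  have herr2 : ψ W' - ψ W - ⟪g, d⟫ ≤ K * ‖d‖^2 := by
    have : ψ W' - ψ W - ⟪g, d⟫ ≤ (1/2)*⟪d, Q d⟫ + σ*‖Q d‖^2 := by linarith
    calc ψ W' - ψ W - ⟪g, d⟫ ≤ (1/2)*⟪d, Q d⟫ + σ*‖Q d‖^2 := this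
      _ ≤ (1/2)*(C*‖d‖^2) + σ*(C^2*‖d‖^2) := by
          have := mul_le_mul_of_nonneg_left hq2 hσ.le
          linarith [hq1]
      _ = K * ‖d‖^2 := by rw [hK]; ring
  rw [Real.norm_eq_abs, abs_of_nonneg herr1]
  have hd1 : ‖d‖ < ε/(K+1) := hW'
  calc ψ W' - ψ W - ⟪g, d⟫ ≤ K * ‖d‖^2 := herr2
    _ = K * ‖d‖ * ‖d‖ := by ring
    _ ≤ K * (ε/(K+1)) * ‖d‖ := by
        have : K * ‖d‖ ≤ K * (ε/(K+1)) := mul_le_mul_of_nonneg_left hd1.le hK0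
        exact mul_le_mul_of_nonneg_right this (norm_nonneg _)
    _ ≤ ε * ‖d‖ := by
        have h1 : K * (ε/(K+1)) ≤ ε := by
          rw [mul_div_assoc', div_le_iff₀ (by linarith : (0:ℝ) < K+1)]
          nlinarith [hε]
        exact mul_le_mul_of_nonneg_right h1 (norm_nonneg _)

lemma psi_contDiff : ContDiffOn ℝ 1 ψ (LinearMap.range Q : Set (MatSp n)) := by
  have hgrad := psi_hasGradient hσ hsa hpsd hPiB hZofW hψ
  have hdiff : Differentiable ℝ ψ := fun W => (hgrad W).hasFDerivAt.differentiableAt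
  have hPcont : Continuous PiB := by
    have : LipschitzWith 1 PiB := by
      refine LipschitzWith.of_dist_le_mul fun a b => ?_
      rw [dist_eq_norm, dist_eq_norm, NNReal.coe_one, one_mul]
      exact proj_nonexp hPiB b a
    exact this.continuous
  have hQc : Continuous fun x : MatSp n => Q x := Q.continuous_of_finiteDimensional
  have hZcont : Continuous ZofW := by
    have he : ZofW = fun W => Xhat - σ • (Q W + G) := funext hZofW
    rw [he]
    exact continuous_const.sub ((hQc.add continuous_const).const_smul σ)
  have hgcont : Continuous fun W : MatSp n => Q W - Q (PiB (ZofW W)) :=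
    hQc.sub (hQc.comp (hPcont.comp hZcont))
  have hfd : fderiv ℝ ψ = fun W =>
      (InnerProductSpace.toDual ℝ (MatSp n)) (Q W - Q (PiB (ZofW W))) :=
    funext fun W => (hgrad W).hasFDerivAt.fderiv
  have hcont : Continuous (fderiv ℝ ψ) := by
    rw [hfd]
    exact (InnerProductSpace.toDual ℝ (MatSp n)).continuous.comp hgcont
  exact (contDiff_one_iff_fderiv.mpr ⟨hdiff, hcont⟩).contDiffOn

lemma psi_min_unique {c : ℝ} (hcpos : 0 < c)
    (hc : ∀ W ∈ LinearMap.range Q, c * ‖W‖^2 ≤ ⟪W, Q W⟫)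
    {W₁ W₂ : MatSp n} (h₁r : W₁ ∈ LinearMap.range Q) (h₂r : W₂ ∈ LinearMap.range Q)
    (h₁ : ∀ W ∈ LinearMap.range Q, ψ W₁ ≤ ψ W)
    (h₂ : ∀ W ∈ LinearMap.range Q, ψ W₂ ≤ ψ W) : W₁ = W₂ := by
  set M : MatSp n := (1/2 : ℝ) • W₁ + (1/2 : ℝ) • W₂ with hM
  have hMr : M ∈ LinearMap.range Q :=
    Submodule.add_mem _ (Submodule.smul_mem _ _ h₁r) (Submodule.smul_mem _ _ h₂r)
  set g := Q M - Q (PiB (ZofW M)) with hg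
  have e1 : W₁ - M = (1/2 : ℝ) • (W₁ - W₂) := by rw [hM]; module
  have e2 : W₂ - M = -((1/2 : ℝ) • (W₁ - W₂)) := by rw [hM]; module
  have H1 := grad_lower hσ hsa hPiB hZofW hψ M W₁
  have H2 := grad_lower hσ hsa hPiB hZofW hψ M W₂
  rw [← hg] at H1 H2
  have hc1 : c * ‖W₁ - M‖^2 ≤ ⟪W₁ - M, Q (W₁ - M)⟫ :=
    hc _ (Submodule.sub_mem _ h₁r hMr)
  have hc2 : c * ‖W₂ - M‖^2 ≤ ⟪W₂ - M, Q (W₂ - M)⟫ :=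
    hc _ (Submodule.sub_mem _ h₂r hMr)
  have hi : ⟪g, W₁ - M⟫ + ⟪g, W₂ - M⟫ = 0 := by
    rw [e1, e2, inner_neg_right]; ring
  have hmin1 : ψ W₁ ≤ ψ M := h₁ M hMr
  have hmin2 : ψ W₂ ≤ ψ M := h₂ M hMr
  have hss : c * ‖W₁ - M‖^2 + c * ‖W₂ - M‖^2 ≤ 0 := by linarith
  have h1z : c * ‖W₁ - M‖^2 = 0 :=
    le_antisymm (by linarith [mul_nonneg hcpos.le (sq_nonneg ‖W₂ - M‖)])
      (mul_nonneg hcpos.le (sq_nonneg _))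
  have hs1 : ‖W₁ - M‖^2 = 0 := (mul_eq_zero.mp h1z).resolve_left hcpos.ne'
  have hW1M : W₁ - M = 0 := by
    rwa [sq_eq_zero_iff, norm_eq_zero] at hs1
  rw [e1] at hW1M
  have : W₁ - W₂ = 0 := by
    rcases smul_eq_zero.mp hW1M with h | h
    · norm_num at h
    · exact h
  exact sub_eq_zero.mp this
end main

end S17

/-- properties of `ψ(W) = inf_Z L_σ(Z, W; X̂)`. -/
theorem stmt_17 (n : ℕ) (Q : MatSp n →ₗ[ℝ] MatSp n)
    (hsa : ∀ X Y : MatSp n, ⟪Q X, Y⟫ = ⟪X, Q Y⟫)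
    (hpsd : ∀ X : MatSp n, 0 ≤ ⟪X, Q X⟫)
    (G : MatSp n) (σ : ℝ) (hσ : 0 < σ) (Xhat : MatSp n)
    -- `Π_{𝔅ₙ}` : the Euclidean projection onto the Birkhoff polytope
    (PiB : MatSp n → MatSp n)
    (hPiB : ∀ Y, PiB Y ∈ Birkhoff n ∧ ∀ V ∈ Birkhoff n, ‖Y - PiB Y‖ ≤ ‖Y - V‖)
    -- `Z(W) := X̂ − σ(QW + G)` and `ψ(W) := inf_Z L_σ(Z, W; X̂)`
    (ZofW : MatSp n → MatSp n) (hZofW : ∀ W, ZofW W = Xhat - σ • (Q W + G))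
    (ψ : MatSp n → ℝ)
    (hψ : ∀ W, ψ W = sInf (Set.range fun Z => augL Q G σ Z W Xhat)) :
    -- (i) the infimum over `Z` is attained uniquely at `σ⁻¹(Z(W) − Π_{𝔅ₙ}(Z(W)))`,
    -- with the explicit value of `ψ(W)`
    (∀ W ∈ LinearMap.range Q,
      augL Q G σ (σ⁻¹ • (ZofW W - PiB (ZofW W))) W Xhat = ψ W ∧
      (∀ Z : MatSp n, Z ≠ σ⁻¹ • (ZofW W - PiB (ZofW W)) →
        ψ W < augL Q G σ Z W Xhat) ∧
      ψ W = (1 / 2) * ⟪W, Q W⟫ + (1 / σ) * ⟪ZofW W, PiB (ZofW W)⟫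
              - (1 / (2 * σ)) * (‖PiB (ZofW W)‖ ^ 2 + ‖Xhat‖ ^ 2)) ∧
    -- (ii) `ψ` is strongly convex and continuously differentiable on `Range(Q)`
    (∃ c : ℝ, 0 < c ∧ StrongConvexOn (LinearMap.range Q : Set (MatSp n)) c ψ) ∧
    ContDiffOn ℝ 1 ψ (LinearMap.range Q : Set (MatSp n)) ∧
    (∀ W ∈ LinearMap.range Q,
      HasGradientAt ψ (Q W - Q (PiB (ZofW W))) W) ∧
    -- (iii) characterization of the unique minimizer of `L_σ(·, ·; X̂)`
    ∀ (Zb : MatSp n), ∀ Wb ∈ LinearMap.range Q,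
      ((∀ (Z : MatSp n), ∀ W ∈ LinearMap.range Q,
          augL Q G σ Zb Wb Xhat ≤ augL Q G σ Z W Xhat) ∧
        (∀ (Z' : MatSp n), ∀ W' ∈ LinearMap.range Q,
          (∀ (Z : MatSp n), ∀ W ∈ LinearMap.range Q,
            augL Q G σ Z' W' Xhat ≤ augL Q G σ Z W Xhat) →
          (Z', W') = (Zb, Wb)))
      ↔ ((∀ W ∈ LinearMap.range Q, ψ Wb ≤ ψ W) ∧
          Zb = σ⁻¹ • (ZofW Wb - PiB (ZofW Wb))) := by
  obtain ⟨c, hcpos, hc⟩ := S17.exists_sc_const hsa hpsd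
  have hpe := S17.psi_eq hσ hPiB hZofW hψ
  have hps := fun (W : MatSp n) {Z} (hZ : Z ≠ σ⁻¹ • (ZofW W - PiB (ZofW W))) =>
    S17.psi_strict hσ hPiB hZofW hψ W hZ
  have hql := S17.quad_lower hσ hPiB hZofW
  have hlow : ∀ (Z W : MatSp n),
      augL Q G σ (σ⁻¹ • (ZofW W - PiB (ZofW W))) W Xhat ≤ augL Q G σ Z W Xhat := by
    intro Z W
    have h := hql Z W
    nlinarith [sq_nonneg ‖Z - σ⁻¹ • (ZofW W - PiB (ZofW W))‖, hσ]
  -- key: any joint minimizer's W-component minimizes ψ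
  have key : ∀ (Z₀ W₀ : MatSp n), W₀ ∈ LinearMap.range Q →
      (∀ (Z : MatSp n), ∀ W ∈ LinearMap.range Q,
        augL Q G σ Z₀ W₀ Xhat ≤ augL Q G σ Z W Xhat) →
      ∀ W ∈ LinearMap.range Q, ψ W₀ ≤ ψ W := by
    intro Z₀ W₀ hW₀ hmin W hW
    have h1 : ψ W₀ ≤ augL Q G σ Z₀ W₀ Xhat := by
      rw [hpe W₀]; exact hlow Z₀ W₀
    have h2 := hmin (σ⁻¹ • (ZofW W - PiB (ZofW W))) W hW
    rw [← hpe W] at h2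
    linarith
  refine ⟨?_, ⟨c, hcpos, S17.strong_convex hσ hsa hpsd hPiB hZofW hψ hc⟩,
    S17.psi_contDiff hσ hsa hpsd hPiB hZofW hψ,
    fun W _ => S17.psi_hasGradient hσ hsa hpsd hPiB hZofW hψ W, ?_⟩
  · intro W _
    exact ⟨(hpe W).symm, fun Z hZ => hps W hZ, S17.psi_formula hσ hPiB hZofW hψ W⟩
  · intro Zb Wb hWbr
    constructor
    · rintro ⟨hmin, -⟩
      refine ⟨key Zb Wb hWbr hmin, ?_⟩
      by_contra hne
      have hlt := hps Wb hne
      have h4 := hmin (σ⁻¹ • (ZofW Wb - PiB (ZofW Wb))) Wb hWbr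
      rw [← hpe Wb] at h4
      linarith
    · rintro ⟨hψmin, hZb⟩
      have hLb : augL Q G σ Zb Wb Xhat = ψ Wb := by rw [hZb, ← hpe Wb]
      have hminall : ∀ (Z : MatSp n), ∀ W ∈ LinearMap.range Q,
          augL Q G σ Zb Wb Xhat ≤ augL Q G σ Z W Xhat := by
        intro Z W hW
        have h1 : ψ Wb ≤ ψ W := hψmin W hW
        have h2 : ψ W ≤ augL Q G σ Z W Xhat := by rw [hpe W]; exact hlow Z W
        linarith [hLb.le, hLb.ge]
      refine ⟨hminall, ?_⟩
      intro Z' W' hW'r hmin'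
      have hW'min := key Z' W' hW'r hmin'
      have hWW : W' = Wb :=
        S17.psi_min_unique hσ hsa hpsd hPiB hZofW hψ hcpos hc hW'r hWbr hW'min hψmin
      subst hWW
      have hZ' : Z' = σ⁻¹ • (ZofW W' - PiB (ZofW W')) := by
        by_contra hne
        have hlt := hps W' hne
        have h4 := hmin' (σ⁻¹ • (ZofW W' - PiB (ZofW W'))) W' hW'r
        rw [← hpe W'] at h4
        linarith
      rw [Prod.ext_iff]
      exact ⟨hZ'.trans hZb.symm, rfl⟩
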